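/- For any continuous function $f$ from the perfect binary tree $\mathcal{T}_k$ of height $k$ (as a metric graph) to $\mathbb{R}$, there exists $x \in \mathbb{R}$ such that $f$ attains the value $x$ on at least $\lceil k/2 \rceil$ distinct edges of $\mathcal{T}_k$. -/

import Mathlib

noncomputable section

/-- Edges of the perfect binary tree `𝒯 k` of height `k`: an edge is indexed by the
binary string recording the branching choices above it.  The empty string is the stem
edge at the root (which therefore has degree one); strings of length `d` index the
`2^d` edges at depth `d`. -/
abbrev PBTEdge (k : ℕ) : Type := {l : List Bool // l.length < k}

/-- The gluing relation on `(edge, parameter)` pairs: the endpoint `t = 1` of an edge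
`l` is identified with the endpoint `t = 0` of each of its two child edges `l ++ [b]`. -/
def PBTRel (k : ℕ) (p q : PBTEdge k × unitInterval) : Prop :=
  ∃ b : Bool, q.1.1 = p.1.1 ++ [b] ∧ p.2 = 1 ∧ q.2 = 0

/-- The perfect binary tree of height `k` as a topological space (the metric graph with
unit edges): the disjoint union of the closed unit edges with endpoints glued. -/
abbrev PBT (k : ℕ) : Type := Quot (PBTRel k)

/-- The point of `𝒯 k` at parameter `t` along edge `e`. -/
def PBT.pt {k : ℕ} (e : PBTEdge k) (t : unitInterval) : PBT k := Quot.mk _ (e, t)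

/-- `f` attains the value `x` on the (closed) edge `e` of `𝒯 k`. -/
def AttainsOn {k : ℕ} (f : PBT k → ℝ) (e : PBTEdge k) (x : ℝ) : Prop :=
  ∃ t : unitInterval, f (PBT.pt e t) = x

/-- `f` attains some single value `x` on at least `n` distinct edges of `𝒯 k`. -/
def AttainsAtLeast {k : ℕ} (f : PBT k → ℝ) (n : ℕ) : Prop :=
  ∃ x : ℝ, ∃ s : Finset (PBTEdge k), n ≤ s.card ∧ ∀ e ∈ s, AttainsOn f e x

/-- `u k` is the largest number `n` (the paper's "smallest natural number" bounding the
guarantee) such that every continuous real-valued function on `𝒯 k` attains some value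
on at least `n` distinct edges. -/
def uPBT (k : ℕ) : ℕ :=
  sSup {n : ℕ | ∀ f : PBT k → ℝ, Continuous f → AttainsAtLeast f n}

/-!
Label each vertex of the tree by the value of `f` there. An edge attains every value between
the labels of its endpoints, so it suffices to find a level `x` crossed by `⌈h/2⌉` edges of
any subtree of height `h`. By induction each of the four grandchild subtrees, of height
`h - 2`, has a level crossed `⌈h/2⌉ - 1` times; pick a grandchild whose level `x` is neither
the least nor the greatest. Other grandchild subtrees then contain a vertex labelled `≤ x` and
a vertex labelled `≥ x`; along the path from the root to one of them the labels pass `x`, and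
that crossing edge lies outside the chosen subtree.
-/

open Set

theorem exists_ne_le_ne_ge {ι α : Type*} [Fintype ι] [LinearOrder α] (x : ι → α)
    (h : 2 < Fintype.card ι) : ∃ m, ∃ i ≠ m, ∃ j ≠ m, x i ≤ x m ∧ x m ≤ x j := by
  classical
  have : Nonempty ι := Fintype.card_pos_iff.mp (by omega)
  obtain ⟨i, hi⟩ := Finite.exists_min x
  obtain ⟨j, hj⟩ := Finite.exists_max x
  obtain ⟨m, -, hm⟩ := Finset.exists_mem_notMem_of_card_lt_card
    (s := {i, j}) (t := Finset.univ) (Finset.card_le_two.trans_lt h)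
  simp only [Finset.mem_insert, Finset.mem_singleton, not_or] at hm
  exact ⟨m, i, Ne.symm hm.1, j, Ne.symm hm.2, hi m, hj m⟩

namespace BinaryLabelling

variable {α : Type*} [LinearOrder α] (w : List Bool → α)

/-- Nodes of the infinite binary tree are binary strings, labelled by `w`; node `s` stands for
an edge whose bottom endpoint is represented by either child of `s`. -/
def CrossesLevel (x : α) (s : List Bool) : Prop :=
  ∃ c : Bool, x ∈ uIcc (w s) (w (s ++ [c]))

/-- The nodes indexing the edges of the subtree of height `h` hanging from `p`. -/
def subtree (p : List Bool) (h : ℕ) : Set (List Bool) :=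
  {s | p <+: s ∧ s.length < p.length + h}

def LevelCrossedAtLeast (p : List Bool) (h n : ℕ) : Prop :=
  ∃ x : α, ∃ E : Finset (List Bool), n ≤ E.card ∧ ↑E ⊆ subtree p h ∧ ∀ s ∈ E, CrossesLevel w x s

variable {w}

theorem CrossesLevel.exists_le_ge {x : α} {s : List Bool} (hs : CrossesLevel w x s) :
    ∃ lo ∈ subtree s 2, ∃ hi ∈ subtree s 2, w lo ≤ x ∧ x ≤ w hi := by
  obtain ⟨c, hc⟩ := hs
  have hself : s ∈ subtree s 2 := ⟨List.prefix_refl s, by omega⟩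
  have hchild : s ++ [c] ∈ subtree s 2 := ⟨List.prefix_append s [c], by simp⟩
  rcases mem_uIcc.mp hc with ⟨hl, hr⟩ | ⟨hl, hr⟩
  · exact ⟨s, hself, s ++ [c], hchild, hl, hr⟩
  · exact ⟨s ++ [c], hchild, s, hself, hl, hr⟩

/-- A discrete intermediate value theorem along the path from `r` down to `q`. -/
theorem exists_crossesLevel_of_prefix {x : α} {r q : List Bool} (hrq : r <+: q) (hne : r ≠ q)
    (hx : x ∈ uIcc (w r) (w q)) :
    ∃ s, r <+: s ∧ s <+: q ∧ s.length < q.length ∧ CrossesLevel w x s := by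
  obtain ⟨t, rfl⟩ := hrq
  induction t generalizing r with
  | nil => simp at hne
  | cons c t ih =>
    by_cases hc : x ∈ uIcc (w r) (w (r ++ [c]))
    · exact ⟨r, List.prefix_refl r, List.prefix_append r _, by simp, c, hc⟩
    have hx' : x ∈ uIcc (w (r ++ [c])) (w (r ++ [c] ++ t)) := by
      simpa [hc] using uIcc_subset_uIcc_union_uIcc (b := w (r ++ [c])) hx
    have ht : t ≠ [] := by
      rintro rfl
      exact hc (by simpa using hx)
    obtain ⟨s, hrs, hsq, hlt, hs⟩ := ih (by simpa using ht) hx'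
    exact ⟨s, (List.prefix_append r [c]).trans hrs, by simpa using hsq, by simpa using hlt, hs⟩

theorem subtree_subset_subtree {p q : List Bool} {h₁ h₂ : ℕ} (hpq : p <+: q)
    (hh : q.length + h₁ ≤ p.length + h₂) : subtree q h₁ ⊆ subtree p h₂ :=
  fun _ hs => ⟨hpq.trans hs.1, by have := hs.2; omega⟩

theorem mem_subtree_trans {p s t : List Bool} {h₁ h₂ : ℕ} (hs : s ∈ subtree p h₁)
    (ht : t ∈ subtree s (h₂ + 1)) : t ∈ subtree p (h₁ + h₂) :=
  ⟨hs.1.trans ht.1, by have := hs.2; have := ht.2; omega⟩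

theorem eq_of_append_pair_prefix {p q : List Bool} {a b : Bool × Bool}
    (ha : p ++ [a.1, a.2] <+: q) (hb : p ++ [b.1, b.2] <+: q) : a = b := by
  have := (List.prefix_of_prefix_length_le ha hb (by simp)).eq_of_length (by simp)
  simpa [Prod.ext_iff] using this

theorem levelCrossedAtLeast_one (p : List Bool) {h : ℕ} (hh : 0 < h) :
    LevelCrossedAtLeast w p h 1 := by
  refine ⟨w p, {p}, by simp, ?_, ?_⟩
  · simpa [subtree] using hh
  · simp only [Finset.mem_singleton, forall_eq]
    exact ⟨true, left_mem_uIcc⟩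

theorem levelCrossedAtLeast_add_three {p : List Bool} {h : ℕ}
    (H : ∀ a b : Bool, LevelCrossedAtLeast w (p ++ [a, b]) (h + 1) ((h + 1 + 1) / 2)) :
    LevelCrossedAtLeast w p (h + 3) ((h + 3 + 1) / 2) := by
  classical
  choose x E hcard hsub hcross using fun ab : Bool × Bool => H ab.1 ab.2
  have hlohi : ∀ ab : Bool × Bool, ∃ lo ∈ subtree (p ++ [ab.1, ab.2]) (h + 2),
      ∃ hi ∈ subtree (p ++ [ab.1, ab.2]) (h + 2), w lo ≤ x ab ∧ x ab ≤ w hi := by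
    intro ab
    obtain ⟨s, hs⟩ := (E ab).card_pos.mp (by have := hcard ab; omega)
    obtain ⟨lo, hlo, hi, hhi, hlox, hxhi⟩ := (hcross ab s hs).exists_le_ge
    exact ⟨lo, mem_subtree_trans (h₂ := 1) (hsub ab hs) hlo,
      hi, mem_subtree_trans (h₂ := 1) (hsub ab hs) hhi, hlox, hxhi⟩
  choose lo hlo hi hhi hlox hxhi using hlohi
  obtain ⟨m, i, him, j, hjm, hxi, hxj⟩ := exists_ne_le_ne_ge x (by simp)
  obtain ⟨n, hnm, q, hq, hxq⟩ : ∃ n ≠ m, ∃ q ∈ subtree (p ++ [n.1, n.2]) (h + 2),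
      x m ∈ uIcc (w p) (w q) := by
    rcases le_total (w p) (x m) with hp | hp
    · exact ⟨j, hjm, hi j, hhi j, mem_uIcc.mpr (Or.inl ⟨hp, hxj.trans (hxhi j)⟩)⟩
    · exact ⟨i, him, lo i, hlo i, mem_uIcc.mpr (Or.inr ⟨(hlox i).trans hxi, hp⟩)⟩
  have hpq : p <+: q := (List.prefix_append p _).trans hq.1
  have hne : p ≠ q := by
    rintro rfl
    simpa using hq.1.length_le
  obtain ⟨s, hps, hsq, hlt, hs⟩ := exists_crossesLevel_of_prefix hpq hne hxq
  have hsE : s ∉ E m := fun hsE => hnm (eq_of_append_pair_prefix hq.1 ((hsub m hsE).1.trans hsq))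
  refine ⟨x m, insert s (E m), ?_, ?_, ?_⟩
  · rw [Finset.card_insert_of_notMem hsE]
    have := hcard m
    omega
  · rw [Finset.coe_insert]
    refine insert_subset ⟨hps, ?_⟩ ((hsub m).trans (subtree_subset_subtree ?_ ?_))
    · have := hq.2
      simp only [List.length_append, List.length_cons, List.length_nil] at this
      omega
    · exact List.prefix_append p _
    · simp only [List.length_append, List.length_cons, List.length_nil]
      omega
  · simpa [hs] using hcross m

variable (w) in
theorem levelCrossedAtLeast_half :
    ∀ (h : ℕ) (p : List Bool), LevelCrossedAtLeast w p h ((h + 1) / 2)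
  | 0, p => ⟨w p, ∅, by simp, by simp, by simp⟩
  | 1, p => levelCrossedAtLeast_one p one_pos
  | 2, p => levelCrossedAtLeast_one p two_pos
  | h + 3, p => levelCrossedAtLeast_add_three fun a b => levelCrossedAtLeast_half (h + 1) _

end BinaryLabelling

namespace PBT

variable {k : ℕ}

theorem continuous_pt (e : PBTEdge k) : Continuous (PBT.pt e) :=
  continuous_quot_mk.comp (Continuous.prodMk_right e)

theorem attainsOn_of_mem_uIcc {f : PBT k → ℝ} (hf : Continuous f) (e : PBTEdge k) {x : ℝ}
    (hx : x ∈ uIcc (f (pt e 0)) (f (pt e 1))) : AttainsOn f e x := by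
  have hfe : Continuous (f ∘ pt e) := hf.comp (continuous_pt e)
  rcases mem_uIcc.mp hx with hx | hx
  · exact intermediate_value_univ 0 1 hfe hx
  · exact intermediate_value_univ 1 0 hfe hx

/-- The label of node `l` is the value of `f` at the top of edge `l`; a node of length `k`
has no edge, and is labelled by the bottom of its parent edge, which is shared by both children
of every edge. -/
def vertexValue (f : PBT k → ℝ) (l : List Bool) : ℝ :=
  if h : l.length < k then f (pt ⟨l, h⟩ 0)
  else if h' : l.dropLast.length < k then f (pt ⟨l.dropLast, h'⟩ 1) else 0

theorem vertexValue_edge (f : PBT k → ℝ) (e : PBTEdge k) : vertexValue f e.1 = f (pt e 0) :=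
  dif_pos e.2

theorem vertexValue_append_singleton (f : PBT k → ℝ) (e : PBTEdge k) (c : Bool) :
    vertexValue f (e.1 ++ [c]) = f (pt e 1) := by
  unfold vertexValue
  split_ifs with h h'
  · exact congrArg f (Quot.sound ⟨c, rfl, rfl, rfl⟩).symm
  · simp
  · simp [e.2] at h'

end PBT

/-- Every continuous function on the perfect binary tree `𝒯 k` attains
some value on at least `⌈k/2⌉` distinct edges. -/
theorem continuous_attains_on_many_edges (k : ℕ) (f : PBT k → ℝ) (hf : Continuous f) :
    AttainsAtLeast f ((k + 1) / 2) := by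
  obtain ⟨x, E, hcard, hsub, hcross⟩ := BinaryLabelling.levelCrossedAtLeast_half (PBT.vertexValue f) k []
  have hE : ∀ l ∈ E, l.length < k := fun l hl => by simpa [BinaryLabelling.subtree] using (hsub hl).2
  refine ⟨x, E.subtype (·.length < k), ?_, fun e he => ?_⟩
  · rwa [Finset.card_subtype, Finset.filter_true_of_mem hE]
  · obtain ⟨c, hc⟩ := hcross e (Finset.mem_subtype.mp he)
    rw [PBT.vertexValue_edge, PBT.vertexValue_append_singleton] at hc
    exact PBT.attainsOn_of_mem_uIcc hf e hc

end
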